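/- (Theorem 4.1, cross approximation, existence form.) Let A ∈ ℝ^{m×n}, let V ∈ ℝ^{n×r} have orthonormal columns, and assume r ≤ min(m,n). Then there exist distinct indices j_1,…,j_r ∈ {1,…,n}, distinct indices i_1,…,i_r ∈ {1,…,m}, and a matrix Q ∈ ℝ^{m×r} with QᵀQ = I_r such that: every column of A E_J lies in the column span of Q, the r×r matrix E_Iᵀ Q is invertible, and ‖A − Q (E_Iᵀ Q)⁻¹ E_Iᵀ A‖_F² ≤ (r+1)² · ‖A − A V Vᵀ‖_F². (When A E_J has full column rank, Q(E_IᵀQ)⁻¹E_IᵀA equals the cross approximation A(:,J) A(I,J)⁻¹ A(I,:).) -/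

import Mathlib

open Matrix BigOperators

/-- One step of the ARP recursion: project out the `i`-th row of `W`
(convention: leave `W` unchanged if that row is zero). -/
noncomputable def arpStep {n r : ℕ} (W : Matrix (Fin n) (Fin r) ℝ) (i : Fin n) :
    Matrix (Fin n) (Fin r) ℝ :=
  if W i = 0 then W
  else W * (1 - (∑ l, (W i l) ^ 2)⁻¹ • Matrix.of fun a b => W i a * W i b)

/-- The ARP iterates `V_k`. -/
noncomputable def arpIter {n r : ℕ} (V : Matrix (Fin n) (Fin r) ℝ) (j : Fin r → Fin n) :
    ℕ → Matrix (Fin n) (Fin r) ℝ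
  | 0 => V
  | k + 1 => if h : k < r then arpStep (arpIter V j k) (j ⟨k, h⟩) else arpIter V j k

/-- The ARP weight `w(j) = ∏_{k=1}^r ‖v_k‖²/(r-k+1)`. -/
noncomputable def arpWeight {n r : ℕ} (V : Matrix (Fin n) (Fin r) ℝ) (j : Fin r → Fin n) : ℝ :=
  ∏ k : Fin r, (∑ l, (arpIter V j k.val (j k) l) ^ 2) / ((r : ℝ) - (k.val : ℝ))

/-- The matrix `E_J` whose `k`-th column is the `j_k`-th standard basis vector of ℝⁿ. -/
def EJ {n k : ℕ} (j : Fin k → Fin n) : Matrix (Fin n) (Fin k) ℝ :=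
  Matrix.of fun i l => if i = j l then 1 else 0

/-- Squared Frobenius norm. -/
def frobSq {m n : ℕ} (A : Matrix (Fin m) (Fin n) ℝ) : ℝ := ∑ i, ∑ j, (A i j) ^ 2

/-! Volume sampling. For `Q` with orthonormal columns and `B = A - QQᵀA`, weight each choice of
row indices `I` by `det (Q_I)²`. By Cauchy–Binet these weights sum to `r!`. When `det Q_I ≠ 0`,
the error of `Q Q_I⁻¹ A_I` splits orthogonally as `‖B‖² + ‖Q_I⁻¹ B_I‖²`, and by Cramer's rule
and Cauchy–Binet once more the weighted second terms sum to `r! · r · ‖B‖²`. Hence the weighted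
mean error is `(r + 1)‖B‖²`, and some `I` does at least as well.

Applied to `Aᵀ` and `V`, this selects columns `J` and an approximation of `A` with columns in the
span of `A(:,J)` and error at most `(r + 1)‖A - AVVᵀ‖²`. The orthogonal projection `QQᵀA` onto an
orthonormal basis `Q` of that span is no worse, and a row selection for this `Q` costs a second
factor `r + 1`. -/

namespace Matrix

open Equiv

variable {R : Type*} [CommRing R] {ι n : Type*} [Fintype ι] [Fintype n] [DecidableEq n]

theorem det_transpose_mul_eq_sum (W X : Matrix ι n R) :
    (Wᵀ * X).det = ∑ f : n → ι, (W.submatrix f id).det * ∏ k, X (f k) k := by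
  have hW : ∀ f : n → ι,
      (W.submatrix f id).det = ∑ σ : Perm n, Perm.sign σ • ∏ k, W (f k) (σ k) := by
    intro f
    rw [← det_transpose, det_apply]
    rfl
  simp_rw [hW, Finset.sum_mul, det_apply, mul_apply, transpose_apply, Fintype.prod_sum,
    Finset.smul_sum]
  rw [Finset.sum_comm]
  refine Fintype.sum_congr _ _ fun f => Fintype.sum_congr _ _ fun σ => ?_
  rw [smul_mul_assoc, Finset.prod_mul_distrib]

theorem sum_det_submatrix_mul_det_submatrix (W X : Matrix ι n R) :
    ∑ f : n → ι, (W.submatrix f id).det * (X.submatrix f id).det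
      = (Fintype.card n).factorial * (Wᵀ * X).det := by
  have hX : ∀ f : n → ι,
      (X.submatrix f id).det = ∑ τ : Perm n, Perm.sign τ • ∏ k, X (f (τ k)) k :=
    fun f => det_apply _
  have hτ : ∀ τ : Perm n,
      ∑ f : n → ι, (W.submatrix f id).det * (Perm.sign τ • ∏ k, X (f (τ k)) k)
        = (Wᵀ * X).det := by
    intro τ
    rw [det_transpose_mul_eq_sum, ← (τ.arrowCongr (Equiv.refl ι)).sum_comp]
    refine Fintype.sum_congr _ _ fun g => ?_
    have hperm : W.submatrix (τ.arrowCongr (Equiv.refl ι) g) id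
        = (W.submatrix g id).submatrix τ.symm id := rfl
    have hsign : ((Perm.sign τ : ℤ) : R) * (Perm.sign τ : ℤ) = 1 := by
      rw [← Int.cast_mul, ← Units.val_mul, Int.units_mul_self, Units.val_one, Int.cast_one]
    rw [hperm, det_permute, Perm.sign_symm, Units.smul_def, zsmul_eq_mul]
    simp only [arrowCongr_apply, Function.comp_apply, symm_apply_apply, coe_refl, id_eq]
    linear_combination ((W.submatrix g id).det * ∏ k, X (g k) k) * hsign
  simp_rw [hX, Finset.mul_sum]
  rw [Finset.sum_comm]
  simp [hτ, Fintype.card_perm]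

theorem det_transpose_mul_self_updateCol {Q : Matrix ι n R} (hQ : Qᵀ * Q = 1) (k : n)
    {b : ι → R} (hb : Qᵀ *ᵥ b = 0) :
    ((Q.updateCol k b)ᵀ * Q.updateCol k b).det = b ⬝ᵥ b := by
  have hgram : (Q.updateCol k b)ᵀ * Q.updateCol k b = diagonal (Pi.mulSingle k (b ⬝ᵥ b)) := by
    rw [← updateRow_transpose, updateRow_mul, mul_updateCol, vecMul_updateCol, hQ, hb,
      ← mulVec_transpose, hb]
    ext a c
    simp only [updateRow_apply, updateCol_apply, diagonal_apply, Pi.mulSingle_apply,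
      Function.update_apply, Pi.zero_apply, one_apply]
    split_ifs <;> simp_all
  rw [hgram, det_diagonal, Finset.prod_pi_mulSingle']
  simp

theorem sum_sq_det_submatrix_of_orthonormal {Q : Matrix ι n ℝ} (hQ : Qᵀ * Q = 1) :
    ∑ f : n → ι, (Q.submatrix f id).det ^ 2 = (Fintype.card n).factorial := by
  simp_rw [sq, sum_det_submatrix_mul_det_submatrix, hQ, det_one, mul_one]

theorem adjugate_mul_apply {p : Type*} (N : Matrix n n R) (Z : Matrix n p R) (k : n) (c : p) :
    (N.adjugate * Z) k c = (N.updateCol k (fun l => Z l c)).det := by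
  rw [← cramer_apply, cramer_eq_adjugate_mulVec]
  rfl

theorem adjugate_eq_det_smul_inv {N : Matrix n n R} (hN : IsUnit N.det) :
    N.adjugate = N.det • N⁻¹ := by
  rw [inv_def, smul_smul, Ring.mul_inverse_cancel _ hN, one_smul]

end Matrix

theorem exists_ne_zero_le_of_sum_mul_le {ι : Type*} [Fintype ι] {w e : ι → ℝ} {c : ℝ}
    (hw : ∀ i, 0 ≤ w i) (hpos : 0 < ∑ i, w i) (h : ∑ i, w i * e i ≤ (∑ i, w i) * c) :
    ∃ i, w i ≠ 0 ∧ e i ≤ c := by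
  by_contra! hlt
  obtain ⟨i₀, -, hi₀⟩ :=
    Finset.exists_lt_of_sum_lt (by simpa using hpos : ∑ _i : ι, (0 : ℝ) < ∑ i, w i)
  have : (∑ i, w i) * c < ∑ i, w i * e i := by
    rw [Finset.sum_mul]
    refine Finset.sum_lt_sum (fun i _ => ?_) ⟨i₀, Finset.mem_univ _, ?_⟩
    · rcases eq_or_ne (w i) 0 with hwi | hwi
      · simp [hwi]
      · exact mul_le_mul_of_nonneg_left (hlt i hwi).le (hw i)
    · exact mul_lt_mul_of_pos_left (hlt i₀ hi₀.ne') hi₀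
  linarith

theorem mul_EJ {m n k : ℕ} (A : Matrix (Fin m) (Fin n) ℝ) (j : Fin k → Fin n) :
    A * EJ j = A.submatrix id j := by
  ext a l
  simp [mul_apply, EJ]

theorem EJ_transpose_mul {m n k : ℕ} (i : Fin k → Fin m) (A : Matrix (Fin m) (Fin n) ℝ) :
    (EJ i)ᵀ * A = A.submatrix i id := by
  ext l c
  simp [mul_apply, EJ]

section frobSq

variable {m n r : ℕ}

theorem frobSq_nonneg (A : Matrix (Fin m) (Fin n) ℝ) : 0 ≤ frobSq A := by
  unfold frobSq
  positivity

theorem frobSq_transpose (A : Matrix (Fin m) (Fin n) ℝ) : frobSq Aᵀ = frobSq A :=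
  Finset.sum_comm

theorem frobSq_smul (c : ℝ) (A : Matrix (Fin m) (Fin n) ℝ) :
    frobSq (c • A) = c ^ 2 * frobSq A := by
  simp [frobSq, Finset.mul_sum, mul_pow]

theorem frobSq_neg (A : Matrix (Fin m) (Fin n) ℝ) : frobSq (-A) = frobSq A := by
  simp [frobSq]

theorem frobSq_eq_trace (A : Matrix (Fin m) (Fin n) ℝ) : frobSq A = (Aᵀ * A).trace := by
  rw [← frobSq_transpose]
  simp [frobSq, trace, mul_apply, sq]

theorem frobSq_add_of_transpose_mul_eq_zero {X Y : Matrix (Fin m) (Fin n) ℝ} (h : Xᵀ * Y = 0) :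
    frobSq (X + Y) = frobSq X + frobSq Y := by
  have h' : Yᵀ * X = 0 := by rw [← transpose_transpose X, ← transpose_mul, h, transpose_zero]
  simp only [frobSq_eq_trace, transpose_add, Matrix.add_mul, Matrix.mul_add, trace_add, h, h',
    trace_zero]
  ring

variable {Q : Matrix (Fin m) (Fin r) ℝ}

theorem frobSq_orthonormal_mul (hQ : Qᵀ * Q = 1) (Y : Matrix (Fin r) (Fin n) ℝ) :
    frobSq (Q * Y) = frobSq Y := by
  rw [frobSq_eq_trace, frobSq_eq_trace, transpose_mul, Matrix.mul_assoc, ← Matrix.mul_assoc Qᵀ, hQ,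
    Matrix.one_mul]

theorem frobSq_add_orthonormal_mul (hQ : Qᵀ * Q = 1) {B : Matrix (Fin m) (Fin n) ℝ}
    (hB : Qᵀ * B = 0) (Y : Matrix (Fin r) (Fin n) ℝ) :
    frobSq (B + Q * Y) = frobSq B + frobSq Y := by
  have h : Bᵀ * (Q * Y) = 0 := by
    rw [← Matrix.mul_assoc, ← transpose_transpose Q, ← transpose_mul, hB, transpose_zero,
      Matrix.zero_mul]
  rw [frobSq_add_of_transpose_mul_eq_zero h, frobSq_orthonormal_mul hQ]

theorem transpose_mul_sub_mul_transpose_mul_eq_zero (hQ : Qᵀ * Q = 1) (A : Matrix (Fin m) (Fin n) ℝ) :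
    Qᵀ * (A - Q * Qᵀ * A) = 0 := by
  rw [Matrix.mul_sub, Matrix.mul_assoc, ← Matrix.mul_assoc Qᵀ, hQ, Matrix.one_mul, sub_self]

theorem frobSq_sub_mul_transpose_mul_le (hQ : Qᵀ * Q = 1) (A : Matrix (Fin m) (Fin n) ℝ)
    (X : Matrix (Fin r) (Fin n) ℝ) :
    frobSq (A - Q * Qᵀ * A) ≤ frobSq (A - Q * X) := by
  have hsplit : A - Q * X = (A - Q * Qᵀ * A) + Q * (Qᵀ * A - X) := by
    rw [Matrix.mul_sub, Matrix.mul_assoc]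
    abel
  rw [hsplit, frobSq_add_orthonormal_mul hQ (transpose_mul_sub_mul_transpose_mul_eq_zero hQ A)]
  linarith [frobSq_nonneg (Qᵀ * A - X)]

end frobSq

section VolumeSampling

variable {m n r : ℕ} {Q : Matrix (Fin m) (Fin r) ℝ}

theorem sum_frobSq_adjugate_mul_submatrix (hQ : Qᵀ * Q = 1) {B : Matrix (Fin m) (Fin n) ℝ}
    (hB : Qᵀ * B = 0) :
    ∑ i : Fin r → Fin m, frobSq ((Q.submatrix i id).adjugate * B.submatrix i id)
      = r.factorial * r * frobSq B := by
  have hentry : ∀ (k : Fin r) (c : Fin n), ∑ i : Fin r → Fin m,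
      ((Q.submatrix i id).adjugate * B.submatrix i id) k c ^ 2
        = r.factorial * ∑ p, B p c ^ 2 := by
    intro k c
    have hupdate : ∀ i : Fin r → Fin m, (Q.submatrix i id).updateCol k (fun l => B (i l) c)
        = (Q.updateCol k (fun p => B p c)).submatrix i id := by
      intro i
      ext l a
      simp [updateCol_apply]
    have hBc : Qᵀ *ᵥ (fun p => B p c) = 0 := by
      ext a
      simpa [mulVec, dotProduct, mul_apply] using congrFun (congrFun hB a) c
    simp_rw [adjugate_mul_apply, submatrix_apply, id, hupdate, sq,
      sum_det_submatrix_mul_det_submatrix, det_transpose_mul_self_updateCol hQ k hBc,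
      Fintype.card_fin, dotProduct]
  unfold frobSq
  rw [Finset.sum_comm]
  simp_rw [Finset.sum_comm (γ := Fin r → Fin m), hentry]
  rw [← Finset.mul_sum, Finset.sum_const, Finset.card_univ, Fintype.card_fin, nsmul_eq_mul,
    Finset.sum_comm (γ := Fin m)]
  ring

theorem sq_det_mul_frobSq_sub_le (hQ : Qᵀ * Q = 1) (A : Matrix (Fin m) (Fin n) ℝ)
    (i : Fin r → Fin m) :
    (Q.submatrix i id).det ^ 2 * frobSq (A - Q * (Q.submatrix i id)⁻¹ * A.submatrix i id)
      ≤ (Q.submatrix i id).det ^ 2 * frobSq (A - Q * Qᵀ * A)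
        + frobSq ((Q.submatrix i id).adjugate * (A - Q * Qᵀ * A).submatrix i id) := by
  set N := Q.submatrix i id
  set B := A - Q * Qᵀ * A with hB
  rcases eq_or_ne N.det 0 with hN | hN
  · simpa [hN] using frobSq_nonneg _
  have hA : A = B + Q * (Qᵀ * A) := by rw [hB, Matrix.mul_assoc, sub_add_cancel]
  have hAI : A.submatrix i id = B.submatrix i id + N * (Qᵀ * A) := by
    conv_lhs => rw [hA]
    rfl
  have hsplit : A - Q * N⁻¹ * A.submatrix i id = B + Q * -(N⁻¹ * B.submatrix i id) := by
    rw [hAI, Matrix.mul_add, ← Matrix.mul_assoc, Matrix.mul_assoc Q N⁻¹ N,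
      nonsing_inv_mul _ hN.isUnit, Matrix.mul_one, Matrix.mul_neg, Matrix.mul_assoc]
    nth_rw 1 [hA]
    abel
  rw [hsplit, frobSq_add_orthonormal_mul hQ (transpose_mul_sub_mul_transpose_mul_eq_zero hQ A),
    frobSq_neg, adjugate_eq_det_smul_inv hN.isUnit, Matrix.smul_mul, frobSq_smul, mul_add]

theorem exists_rows_frobSq_sub_le (hQ : Qᵀ * Q = 1) (A : Matrix (Fin m) (Fin n) ℝ) :
    ∃ i : Fin r → Fin m, Function.Injective i ∧ IsUnit (Q.submatrix i id).det ∧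
      frobSq (A - Q * (Q.submatrix i id)⁻¹ * A.submatrix i id)
        ≤ (r + 1) * frobSq (A - Q * Qᵀ * A) := by
  set B := A - Q * Qᵀ * A
  have hw := sum_sq_det_submatrix_of_orthonormal hQ
  rw [Fintype.card_fin] at hw
  obtain ⟨i, hi, hle⟩ := exists_ne_zero_le_of_sum_mul_le (c := (r + 1) * frobSq B)
    (fun i => sq_nonneg (Q.submatrix i id).det) (by rw [hw]; positivity) <| calc
      _ ≤ ∑ i : Fin r → Fin m, ((Q.submatrix i id).det ^ 2 * frobSq B
            + frobSq ((Q.submatrix i id).adjugate * B.submatrix i id)) :=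
        Finset.sum_le_sum fun i _ => sq_det_mul_frobSq_sub_le hQ A i
      _ = _ := by
        rw [Finset.sum_add_distrib, ← Finset.sum_mul,
          sum_frobSq_adjugate_mul_submatrix hQ (transpose_mul_sub_mul_transpose_mul_eq_zero hQ A), hw]
        ring
  have hdet : (Q.submatrix i id).det ≠ 0 := (pow_ne_zero_iff two_ne_zero).mp hi
  refine ⟨i, fun a b hab => ?_, hdet.isUnit, hle⟩
  by_contra hne
  exact hdet (det_zero_of_row_eq hne (congrArg Q hab))

end VolumeSampling

theorem exists_cols_frobSq_sub_le {m n r : ℕ} {V : Matrix (Fin n) (Fin r) ℝ} (hV : Vᵀ * V = 1)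
    (A : Matrix (Fin m) (Fin n) ℝ) :
    ∃ j : Fin r → Fin n, Function.Injective j ∧ ∃ Y : Matrix (Fin r) (Fin n) ℝ,
      frobSq (A - A.submatrix id j * Y) ≤ (r + 1) * frobSq (A - A * V * Vᵀ) := by
  obtain ⟨j, hj, -, hle⟩ := exists_rows_frobSq_sub_le hV Aᵀ
  refine ⟨j, hj, (V * (V.submatrix j id)⁻¹)ᵀ, ?_⟩
  rw [← frobSq_transpose, ← frobSq_transpose (A - A * V * Vᵀ)]
  convert hle using 3 <;> simp [transpose_sub, transpose_mul, Matrix.mul_assoc, transpose_submatrix]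

theorem exists_orthonormal_mul_eq {m r : ℕ} (hrm : r ≤ m) (T : Matrix (Fin m) (Fin r) ℝ) :
    ∃ Q : Matrix (Fin m) (Fin r) ℝ, Qᵀ * Q = 1 ∧ ∃ C : Matrix (Fin r) (Fin r) ℝ, T = Q * C := by
  -- Gram–Schmidt on `T` padded by zero columns gives `U * R` with `R` upper triangular, so the
  -- first `r` columns of `U` already span the columns of `T`.
  let v : Fin m → EuclideanSpace ℝ (Fin m) := fun p =>
    WithLp.toLp 2 fun a => if h : p.val < r then T a ⟨p, h⟩ else 0
  let b := InnerProductSpace.gramSchmidtOrthonormalBasis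
    (finrank_euclideanSpace (𝕜 := ℝ) (ι := Fin m)) v
  let e := (EuclideanSpace.basisFun (Fin m) ℝ).toBasis
  let U := e.toMatrix b
  let R := b.toBasis.toMatrix v
  have hU : Uᵀ * U = 1 := by
    have := (EuclideanSpace.basisFun (Fin m) ℝ).toMatrix_orthonormalBasis_conjTranspose_mul_self b
    rwa [conjTranspose_eq_transpose_of_trivial] at this
  have hUR : U * R = e.toMatrix v := Module.Basis.toMatrix_mul_toMatrix e b.toBasis v
  refine ⟨U.submatrix id (Fin.castLE hrm), ?_, R.submatrix (Fin.castLE hrm) (Fin.castLE hrm), ?_⟩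
  · rw [transpose_submatrix, ← submatrix_mul _ _ _ id _ Function.bijective_id, hU,
      submatrix_one _ (Fin.castLE_injective hrm)]
  · ext a l
    have hT : T a l = (U * R) a (Fin.castLE hrm l) := by
      rw [hUR, Module.Basis.toMatrix_apply]
      simp [v, e]
    have hR : ∀ p ∉ Set.range (Fin.castLE hrm), R p (Fin.castLE hrm l) = 0 := by
      intro p hp
      have hlp : Fin.castLE hrm l < p := by
        by_contra! h
        exact hp ⟨⟨p, Nat.lt_of_le_of_lt h l.isLt⟩, rfl⟩
      exact InnerProductSpace.gramSchmidtOrthonormalBasis_inv_triangular' _ v hlp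
    rw [hT, mul_apply, mul_apply]
    exact (Fintype.sum_of_injective _ (Fin.castLE_injective hrm) _ _
      (fun p hp => by rw [hR p hp, mul_zero]) fun k => rfl).symm

theorem cross_approximation_existence_general {m n r : ℕ} (hrm : r ≤ m)
    (A : Matrix (Fin m) (Fin n) ℝ)
    (V : Matrix (Fin n) (Fin r) ℝ) (hV : Vᵀ * V = 1) :
    ∃ j : Fin r → Fin n, Function.Injective j ∧
      ∃ i : Fin r → Fin m, Function.Injective i ∧
        ∃ Q : Matrix (Fin m) (Fin r) ℝ, Qᵀ * Q = 1 ∧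
          (∃ C : Matrix (Fin r) (Fin r) ℝ, A * EJ j = Q * C) ∧
          IsUnit ((EJ i)ᵀ * Q).det ∧
          frobSq (A - Q * ((EJ i)ᵀ * Q)⁻¹ * (EJ i)ᵀ * A) ≤
            ((r : ℝ) + 1) ^ 2 * frobSq (A - A * V * Vᵀ) := by
  obtain ⟨j, hj, Y, hcols⟩ := exists_cols_frobSq_sub_le hV A
  obtain ⟨Q, hQ, C, hC⟩ := exists_orthonormal_mul_eq hrm (A.submatrix id j)
  have hproj : frobSq (A - Q * Qᵀ * A) ≤ (r + 1) * frobSq (A - A * V * Vᵀ) :=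
    (frobSq_sub_mul_transpose_mul_le hQ A (C * Y)).trans (by rwa [hC, Matrix.mul_assoc] at hcols)
  obtain ⟨i, hi, hdet, hrows⟩ := exists_rows_frobSq_sub_le hQ A
  refine ⟨j, hj, i, hi, Q, hQ, ⟨C, by rw [mul_EJ, hC]⟩, by rwa [EJ_transpose_mul], ?_⟩
  rw [Matrix.mul_assoc (Q * _), EJ_transpose_mul, EJ_transpose_mul]
  calc _ ≤ (r + 1) * frobSq (A - Q * Qᵀ * A) := hrows
    _ ≤ (r + 1) * ((r + 1) * frobSq (A - A * V * Vᵀ)) := by gcongr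
    _ = _ := by ring

/-- Theorem 4.1, cross approximation, existence form: there are column
indices `J`, row indices `I`, and an orthonormal basis `Q` of the span of `A(:,J)` with
`E_Iᵀ Q` invertible and `‖A − Q (E_Iᵀ Q)⁻¹ E_Iᵀ A‖_F² ≤ (r+1)²‖A − AVVᵀ‖_F²`. -/
theorem cross_approximation_existence {m n r : ℕ} (hrm : r ≤ m) (hrn : r ≤ n)
    (A : Matrix (Fin m) (Fin n) ℝ)
    (V : Matrix (Fin n) (Fin r) ℝ) (hV : Vᵀ * V = 1) :
    ∃ j : Fin r → Fin n, Function.Injective j ∧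
      ∃ i : Fin r → Fin m, Function.Injective i ∧
        ∃ Q : Matrix (Fin m) (Fin r) ℝ, Qᵀ * Q = 1 ∧
          (∃ C : Matrix (Fin r) (Fin r) ℝ, A * EJ j = Q * C) ∧
          IsUnit ((EJ i)ᵀ * Q).det ∧
          frobSq (A - Q * ((EJ i)ᵀ * Q)⁻¹ * (EJ i)ᵀ * A) ≤
            ((r : ℝ) + 1) ^ 2 * frobSq (A - A * V * Vᵀ) :=
  cross_approximation_existence_general hrm A V hV
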